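/- arXiv:2307.04786 — 5 statements merged into one kernel-verified Lean document; each statement's English description precedes it below -/
import Mathlib

section
/- If σ is a strategy for Nature over a causal measurement scenario M, and s, t ∈ σ with s ⊆ t and x is accessible from s (i.e., s ⊢⊆ x), then for any outcome o, if s ∪ {(x,o)} ∈ σ then t ∪ {(x,o)} ∈ σ. -/
/-- A causal measurement scenario: a type of measurements `X`, outcome sets
`O x`, and an enabling relation from sets of events to measurements. -/
structure CMS (X Ω : Type*) where
  O : X → Set Ω
  enab : Set (X × Ω) → X → Prop

namespace CMS

variable {X Ω : Type*}

/-- A set of events is consistent if it is the graph of a partial function. -/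
def consistent (s : Set (X × Ω)) : Prop :=
  ∀ x o o', (x, o) ∈ s → (x, o') ∈ s → o = o'

/-- The domain of a set of events: the measurements performed. -/
def domain (s : Set (X × Ω)) : Set X := {x | ∃ o, (x, o) ∈ s}

/-- Accessibility: `x` may be performed after the events in `s`. -/
def acc (M : CMS X Ω) (s : Set (X × Ω)) (x : X) : Prop :=
  x ∉ domain s ∧ ∃ t ⊆ s, M.enab t x

/-- Histories: the least family containing `∅` and closed under adjoining
an event `(x, o)` for accessible `x` and `o ∈ O x`. -/
inductive Hist (M : CMS X Ω) : Set (X × Ω) → Prop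
  | empty : Hist M ∅
  | step {s : Set (X × Ω)} {x : X} {o : Ω} :
      Hist M s → M.acc s x → o ∈ M.O x → Hist M (s ∪ {(x, o)})

/-- A strategy for Nature: a (nonempty) downward-closed set of histories,
deterministic and total: unique outcome responses to accessible measurements. -/
structure IsStrategy (M : CMS X Ω) (σ : Set (Set (X × Ω))) : Prop where
  nonempty : σ.Nonempty
  hist : ∀ s ∈ σ, M.Hist s
  dc : ∀ s t : Set (X × Ω), M.Hist s → s ⊆ t → t ∈ σ → s ∈ σ
  resp : ∀ s ∈ σ, ∀ x : X, M.acc s x →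
    ∃! o : Ω, o ∈ M.O x ∧ s ∪ {(x, o)} ∈ σ

/-- The restriction `M_U` of a scenario to a subset `U` of measurements. -/
def restrict (M : CMS X Ω) (U : Set X) : CMS X Ω where
  O := M.O
  enab := fun s x => M.enab s x ∧ domain s ∪ {x} ⊆ U

end CMS

open CMS

/-!
If `x` has already been measured in `t`, with outcome `o'`, then `s ∪ {(x, o')}` is a history
below `t`, hence lies in `σ`; otherwise `x` is accessible from `t` as well (the enabling
events in `s` are still present), and totality at `t` yields some `t ∪ {(x, o')} ∈ σ`, below
which again lies `s ∪ {(x, o')}`. In both cases determinism at `s` forces `o' = o`.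
-/

namespace CMS

variable {X Ω : Type*} {M : CMS X Ω} {σ : Set (Set (X × Ω))} {s t : Set (X × Ω)} {x : X}
  {o o' : Ω}

theorem Hist.mem_O (ht : M.Hist t) (hxo : (x, o) ∈ t) : o ∈ M.O x := by
  induction ht with
  | empty => exact absurd hxo (Set.notMem_empty _)
  | step _ _ hO ih =>
    rcases hxo with hxo | hxo
    · exact ih hxo
    · obtain ⟨rfl, rfl⟩ := Prod.mk.inj hxo
      exact hO

theorem acc.mono (hacc : M.acc s x) (hst : s ⊆ t) (hx : x ∉ domain t) : M.acc t x :=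
  let ⟨u, hus, hu⟩ := hacc.2
  ⟨hx, u, hus.trans hst, hu⟩

namespace IsStrategy

theorem mem_O (hσ : M.IsStrategy σ) (h : s ∪ {(x, o)} ∈ σ) : o ∈ M.O x :=
  (hσ.hist _ h).mem_O (Or.inr rfl)

theorem union_singleton_mem_of_subset (hσ : M.IsStrategy σ) (hs : s ∈ σ) (hacc : M.acc s x)
    (hO : o ∈ M.O x) (ht : t ∈ σ) (hsub : s ∪ {(x, o)} ⊆ t) : s ∪ {(x, o)} ∈ σ :=
  hσ.dc _ t ((hσ.hist s hs).step hacc hO) hsub ht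

theorem outcome_unique (hσ : M.IsStrategy σ) (hs : s ∈ σ) (hacc : M.acc s x)
    (ho : s ∪ {(x, o)} ∈ σ) (ho' : s ∪ {(x, o')} ∈ σ) : o = o' :=
  (hσ.resp s hs x hacc).unique ⟨hσ.mem_O ho, ho⟩ ⟨hσ.mem_O ho', ho'⟩

end IsStrategy

end CMS

/-- Monotonicity of strategies for Nature. -/
theorem monotonicity {X Ω : Type*} (M : CMS X Ω) (σ : Set (Set (X × Ω)))
    (hσ : M.IsStrategy σ) (s t : Set (X × Ω)) (hs : s ∈ σ) (ht : t ∈ σ)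
    (hst : s ⊆ t) (x : X) (hacc : M.acc s x) (o : Ω)
    (ho : s ∪ {(x, o)} ∈ σ) : t ∪ {(x, o)} ∈ σ := by
  by_cases hx : x ∈ domain t
  · obtain ⟨o', hxo'⟩ := hx
    have hxo't : {(x, o')} ⊆ t := Set.singleton_subset_iff.2 hxo'
    have ho' : s ∪ {(x, o')} ∈ σ := hσ.union_singleton_mem_of_subset hs hacc
      ((hσ.hist t ht).mem_O hxo') ht (Set.union_subset hst hxo't)
    obtain rfl := hσ.outcome_unique hs hacc ho ho'
    rwa [Set.union_eq_self_of_subset_right hxo't]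
  · obtain ⟨o', ⟨hO', ho't⟩, -⟩ := hσ.resp t ht x (hacc.mono hst hx)
    have ho' : s ∪ {(x, o')} ∈ σ := hσ.union_singleton_mem_of_subset hs hacc hO' ho't
      (Set.union_subset_union_left _ hst)
    rwa [hσ.outcome_unique hs hacc ho ho']
end

section
/- For subsets U ⊆ V of measurements of a causal measurement scenario M, the set of histories Hist(M_U) of the restricted scenario M_U is a subset of Hist(M_V) that is downward closed under set inclusion: if s ∈ Hist(M_V), t ∈ Hist(M_U), and s ⊆ t, then s ∈ Hist(M_U). -/
open CMS

/-! The histories of `M_U` are exactly the histories of `M` whose domain lies in `U`: the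
restriction only prunes steps, and a history's domain bounds the domain of every enabling set
used along it. Both claims then follow because the domain is monotone under inclusion. -/

namespace CMS

variable {X Ω : Type*}

theorem domain_mono {s t : Set (X × Ω)} (hst : s ⊆ t) : domain s ⊆ domain t :=
  fun _ ⟨o, h⟩ => ⟨o, hst h⟩

theorem domain_union_singleton (s : Set (X × Ω)) (x : X) (o : Ω) :
    domain (s ∪ {(x, o)}) = domain s ∪ {x} := by
  ext y
  simp [domain, exists_or]

theorem restrict_enab_iff {M : CMS X Ω} {U : Set X} {s : Set (X × Ω)} {x : X} :
    (M.restrict U).enab s x ↔ M.enab s x ∧ domain s ∪ {x} ⊆ U :=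
  Iff.rfl

theorem acc_mono {M N : CMS X Ω} (henab : ∀ s x, M.enab s x → N.enab s x)
    {s : Set (X × Ω)} {x : X} (h : M.acc s x) : N.acc s x :=
  let ⟨hx, t, hts, ht⟩ := h
  ⟨hx, t, hts, henab t x ht⟩

theorem Hist.mono {M N : CMS X Ω} (hO : ∀ x, M.O x ⊆ N.O x)
    (henab : ∀ s x, M.enab s x → N.enab s x) {s : Set (X × Ω)} (hs : M.Hist s) :
    N.Hist s := by
  induction hs with
  | empty => exact .empty
  | step _ hacc ho ih => exact ih.step (acc_mono henab hacc) (hO _ ho)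

theorem Hist.domain_subset_of_restrict {M : CMS X Ω} {U : Set X} {s : Set (X × Ω)}
    (hs : (M.restrict U).Hist s) : domain s ⊆ U := by
  induction hs with
  | empty => rintro _ ⟨_, ⟨⟩⟩
  | @step s x o _ hacc _ ih =>
    obtain ⟨-, t, -, hxt⟩ := hacc
    have hxU := (restrict_enab_iff.1 hxt).2
    rw [domain_union_singleton]
    exact Set.union_subset ih (Set.subset_union_right.trans hxU)

theorem Hist.restrict_of_domain_subset {M : CMS X Ω} {U : Set X} {s : Set (X × Ω)}
    (hs : M.Hist s) (hU : domain s ⊆ U) : (M.restrict U).Hist s := by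
  induction hs with
  | empty => exact .empty
  | @step s x o _ hacc ho ih =>
    rw [domain_union_singleton, Set.union_subset_iff] at hU
    obtain ⟨hx, t, hts, ht⟩ := hacc
    have htU : domain t ∪ {x} ⊆ U :=
      Set.union_subset ((domain_mono hts).trans hU.1) hU.2
    exact (ih hU.1).step ⟨hx, t, hts, ht, htU⟩ ho

theorem Hist.of_restrict {M : CMS X Ω} {U : Set X} {s : Set (X × Ω)}
    (hs : (M.restrict U).Hist s) : M.Hist s :=
  Hist.mono (M := M.restrict U) (N := M) (fun _ => le_rfl)
    (fun _ _ h => (restrict_enab_iff.1 h).1) hs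

theorem hist_restrict_iff {M : CMS X Ω} {U : Set X} {s : Set (X × Ω)} :
    (M.restrict U).Hist s ↔ M.Hist s ∧ domain s ⊆ U :=
  ⟨fun hs => ⟨hs.of_restrict, hs.domain_subset_of_restrict⟩,
    fun ⟨hs, hU⟩ => hs.restrict_of_domain_subset hU⟩

end CMS

/-- For `U ⊆ V`, `Hist(M_U)` is a down-closed subset of `Hist(M_V)`. -/
theorem hist_restrict_mono_and_downclosed {X Ω : Type*} (M : CMS X Ω)
    (U V : Set X) (hUV : U ⊆ V) :
    (∀ s : Set (X × Ω), (M.restrict U).Hist s → (M.restrict V).Hist s) ∧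
    (∀ s t : Set (X × Ω), (M.restrict V).Hist s → (M.restrict U).Hist t →
      s ⊆ t → (M.restrict U).Hist s) := by
  simp only [hist_restrict_iff]
  exact ⟨fun _ ⟨hs, hsU⟩ => ⟨hs, hsU.trans hUV⟩,
    fun _ _ ⟨hs, _⟩ ⟨_, htU⟩ hst => ⟨hs, (domain_mono hst).trans htU⟩⟩
end

section
/- In the flat causal measurement scenario on a finite set X with nonempty outcome sets, strategies for Nature over M_U are in bijective correspondence with functions assigning each x ∈ U an outcome in O_x: every strategy σ over M_U equals the down-set of histories { s : dom(s) ⊆ U, ∀ (x,o) ∈ s, o = f(x) } for a unique f ∈ ∏_{x∈U} O_x. -/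
open CMS

lemma restrict_hist_mem {X Ω : Type*} {M : CMS X Ω} {U : Set X} {s : Set (X × Ω)}
    (hs : (M.restrict U).Hist s) : ∀ x o, (x, o) ∈ s → x ∈ U ∧ o ∈ M.O x := by
  induction hs with
  | empty => simp
  | @step s x o _ hacc ho ih =>
    intro y p hyp
    rcases hyp with h1 | h1
    · exact ih y p h1
    · obtain ⟨hx, t, hts, ht⟩ := hacc
      have hxU : x ∈ U := ht.2 (Or.inr rfl)
      simp only [Set.mem_singleton_iff, Prod.mk.injEq] at h1
      obtain ⟨rfl, rfl⟩ := h1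
      exact ⟨hxU, ho⟩

/-- In a flat scenario on a finite `X` with nonempty outcome sets, strategies over
`M_U` correspond bijectively to assignments of outcomes to the measurements in `U`. -/
theorem flat_strategies_bijective {X Ω : Type*} [Finite X] (M : CMS X Ω)
    (hflat : ∀ (s : Set (X × Ω)) (x : X), M.enab s x ↔ s = ∅)
    (hO : ∀ x : X, (M.O x).Nonempty) (U : Set X)
    (σ : Set (Set (X × Ω))) (hσ : (M.restrict U).IsStrategy σ) :
    ∃! f : U → Ω, (∀ x : U, f x ∈ M.O x.1) ∧
      σ = {s | (M.restrict U).Hist s ∧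
        ∀ (x : X) (o : Ω), (x, o) ∈ s → ∀ h : x ∈ U, o = f ⟨x, h⟩} := by
  classical
  obtain ⟨t0, ht0⟩ := hσ.nonempty
  have hEmpty : (∅ : Set (X × Ω)) ∈ σ :=
    hσ.dc ∅ t0 Hist.empty (Set.empty_subset _) ht0
  have haccE : ∀ x ∈ U, (M.restrict U).acc ∅ x := by
    intro x hx
    refine ⟨?_, ∅, Set.Subset.rfl, (hflat ∅ x).mpr rfl, ?_⟩
    · simp [CMS.domain]
    · intro y hy
      rcases hy with h | h
      · simp [CMS.domain] at h
      · simp only [Set.mem_singleton_iff] at h; subst h; exact hx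
  have key : ∀ x : U, ∃! o, o ∈ M.O x.1 ∧ ({(x.1, o)} : Set (X × Ω)) ∈ σ := by
    intro x
    have := hσ.resp ∅ hEmpty x.1 (haccE x.1 x.2)
    simp at this; exact this
  choose f hf using key
  have hfO : ∀ x : U, f x ∈ M.O x.1 := fun x => (hf x).1.1
  have hfσ : ∀ x : U, ({(x.1, f x)} : Set (X × Ω)) ∈ σ := fun x => (hf x).1.2
  have hfu : ∀ (x : U) (o : Ω), o ∈ M.O x.1 → ({(x.1, o)} : Set (X × Ω)) ∈ σ →
      o = f x := fun x o h1 h2 => (hf x).2 o ⟨h1, h2⟩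
  have histSingle : ∀ x ∈ U, ∀ o ∈ M.O x, (M.restrict U).Hist {(x, o)} := by
    intro x hx o ho
    have := Hist.step (M := M.restrict U) Hist.empty (haccE x hx) ho
    simpa using this
  have fwd : ∀ s ∈ σ, ∀ x o, (x, o) ∈ s → ∀ h : x ∈ U, o = f ⟨x, h⟩ := by
    intro s hs x o hxo h
    have hmem := restrict_hist_mem (hσ.hist s hs) x o hxo
    have hsub : ({(x, o)} : Set (X × Ω)) ⊆ s := by
      intro p hp; simp only [Set.mem_singleton_iff] at hp; subst hp; exact hxo
    have hsing : ({(x, o)} : Set (X × Ω)) ∈ σ :=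
      hσ.dc _ s (histSingle x h o hmem.2) hsub hs
    exact hfu ⟨x, h⟩ o hmem.2 hsing
  have back : ∀ s, (M.restrict U).Hist s →
      (∀ x o, (x, o) ∈ s → ∀ h : x ∈ U, o = f ⟨x, h⟩) → s ∈ σ := by
    intro s hs
    induction hs with
    | empty => intro _; exact hEmpty
    | @step s x o hhist hacc ho ih =>
      intro hall
      have hsσ : s ∈ σ := ih (fun y p hyp hyU => hall y p (Or.inl hyp) hyU)
      obtain ⟨hx, t, hts, ht⟩ := hacc
      have hxU : x ∈ U := ht.2 (Or.inr rfl)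
      have hox : o = f ⟨x, hxU⟩ := hall x o (Or.inr rfl) hxU
      obtain ⟨o', ⟨ho', hso'⟩, _⟩ := hσ.resp s hsσ x ⟨hx, t, hts, ht⟩
      have hsing : ({(x, o')} : Set (X × Ω)) ∈ σ :=
        hσ.dc _ _ (histSingle x hxU o' ho') Set.subset_union_right hso'
      have ho'f : o' = f ⟨x, hxU⟩ := hfu ⟨x, hxU⟩ o' ho' hsing
      rw [hox, ← ho'f]
      exact hso'
  refine ⟨f, ⟨hfO, ?_⟩, ?_⟩
  · ext s
    constructor
    · intro hs
      exact ⟨hσ.hist s hs, fwd s hs⟩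
    · intro ⟨h1, h2⟩
      exact back s h1 h2
  · rintro g ⟨hgO, hgσ⟩
    funext x
    have hx : ({(x.1, f x)} : Set (X × Ω)) ∈ σ := hfσ x
    rw [hgσ] at hx
    have := hx.2 x.1 (f x) rfl x.2
    rw [this]
end

section
/- In the GP-style encoding of a two-agent causal Bell scenario with ω₁ < ω₂, every strategy σ over the full scenario determines a unique pair of functions (g : I₁ → O₁, h : I₁ × I₂ → O₂) such that {((ω₁,i), g(i))} ∈ σ for all i ∈ I₁, and {((ω₁,i), g(i)), ((ω₂,j), h(i,j))} ∈ σ for all i ∈ I₁, j ∈ I₂. -/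
open CMS

/-- The GP-style encoding of the two-agent causal Bell scenario with ω₁ < ω₂. -/
def GP (I₁ I₂ O₁ O₂ : Type*) : CMS (I₁ ⊕ I₂) (O₁ ⊕ O₂) where
  O := fun x => Sum.elim (fun _ => (Set.range Sum.inl : Set (O₁ ⊕ O₂)))
    (fun _ => (Set.range Sum.inr : Set (O₁ ⊕ O₂))) x
  enab := fun s x => Sum.elim (fun _ => s = ∅)
    (fun _ => ∃ (i : I₁) (o : O₁), s = {(Sum.inl i, Sum.inl o)}) x

theorem existsUnique_forall_of_forall_existsUnique {α : Sort*} {β : α → Sort*}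
    {p : ∀ a, β a → Prop} (h : ∀ a, ∃! b, p a b) : ∃! f : ∀ a, β a, ∀ a, p a (f a) := by
  choose f hf hf_unique using h
  exact ⟨f, hf, fun f' hf' => funext fun a => hf_unique a (f' a) (hf' a)⟩

theorem Function.Injective.existsUnique_mem_range_iff {α β : Type*} {f : α → β}
    (hf : Function.Injective f) {p : β → Prop} :
    (∃! b, b ∈ Set.range f ∧ p b) ↔ ∃! a, p (f a) := by
  constructor
  · rintro ⟨_, ⟨⟨a, rfl⟩, ha⟩, h_unique⟩
    exact ⟨a, ha, fun a' ha' => hf (h_unique (f a') ⟨⟨a', rfl⟩, ha'⟩)⟩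
  · rintro ⟨a, ha, h_unique⟩
    refine ⟨f a, ⟨⟨a, rfl⟩, ha⟩, ?_⟩
    rintro _ ⟨⟨a', rfl⟩, ha'⟩
    rw [h_unique a' ha']

namespace CMS

theorem IsStrategy.empty_mem {X Ω : Type*} {M : CMS X Ω} {σ : Set (Set (X × Ω))}
    (hσ : M.IsStrategy σ) : ∅ ∈ σ := by
  obtain ⟨s, hs⟩ := hσ.nonempty
  exact hσ.dc ∅ s Hist.empty (Set.empty_subset s) hs

end CMS

namespace GP

variable {I₁ I₂ O₁ O₂ : Type*}

theorem acc_empty_inl (i : I₁) : (GP I₁ I₂ O₁ O₂).acc ∅ (Sum.inl i) :=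
  ⟨fun ⟨_, h⟩ => h, ∅, subset_rfl, rfl⟩

theorem acc_singleton_inr (i : I₁) (o : O₁) (j : I₂) :
    (GP I₁ I₂ O₁ O₂).acc {(Sum.inl i, Sum.inl o)} (Sum.inr j) := by
  refine ⟨?_, _, subset_rfl, i, o, rfl⟩
  rintro ⟨_, h⟩
  simp at h

theorem existsUnique_first_response {σ : Set (Set ((I₁ ⊕ I₂) × (O₁ ⊕ O₂)))}
    (hσ : (GP I₁ I₂ O₁ O₂).IsStrategy σ) (i : I₁) :
    ∃! o : O₁, ({(Sum.inl i, Sum.inl o)} : Set ((I₁ ⊕ I₂) × (O₁ ⊕ O₂))) ∈ σ := by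
  have h := hσ.resp ∅ hσ.empty_mem (Sum.inl i) (acc_empty_inl i)
  simp only [Set.empty_union] at h
  exact Sum.inl_injective.existsUnique_mem_range_iff.mp h

theorem existsUnique_second_response {σ : Set (Set ((I₁ ⊕ I₂) × (O₁ ⊕ O₂)))}
    (hσ : (GP I₁ I₂ O₁ O₂).IsStrategy σ) {i : I₁} {o : O₁}
    (hio : ({(Sum.inl i, Sum.inl o)} : Set ((I₁ ⊕ I₂) × (O₁ ⊕ O₂))) ∈ σ) (j : I₂) :
    ∃! o' : O₂, ({(Sum.inl i, Sum.inl o), (Sum.inr j, Sum.inr o')} :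
      Set ((I₁ ⊕ I₂) × (O₁ ⊕ O₂))) ∈ σ := by
  have h := hσ.resp _ hio (Sum.inr j) (acc_singleton_inr i o j)
  simp only [Set.union_singleton] at h
  simpa only [Set.pair_comm] using Sum.inr_injective.existsUnique_mem_range_iff.mp h

end GP

theorem gp_strategy_functions_general (I₁ I₂ O₁ O₂ : Type*)
    (σ : Set (Set ((I₁ ⊕ I₂) × (O₁ ⊕ O₂))))
    (hσ : (GP I₁ I₂ O₁ O₂).IsStrategy σ) :
    ∃! p : (I₁ → O₁) × (I₁ × I₂ → O₂),
      (∀ i : I₁,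
        ({(Sum.inl i, Sum.inl (p.1 i))} : Set ((I₁ ⊕ I₂) × (O₁ ⊕ O₂))) ∈ σ) ∧
      (∀ (i : I₁) (j : I₂),
        ({(Sum.inl i, Sum.inl (p.1 i)), (Sum.inr j, Sum.inr (p.2 (i, j)))} :
          Set ((I₁ ⊕ I₂) × (O₁ ⊕ O₂))) ∈ σ) := by
  obtain ⟨g, hg, hg_unique⟩ := existsUnique_forall_of_forall_existsUnique
    (GP.existsUnique_first_response hσ)
  obtain ⟨h, hh, hh_unique⟩ := existsUnique_forall_of_forall_existsUnique
    fun ij : I₁ × I₂ => GP.existsUnique_second_response hσ (hg ij.1) ij.2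
  refine ⟨(g, h), ⟨hg, fun i j => hh (i, j)⟩, ?_⟩
  rintro ⟨g', h'⟩ ⟨hg', hh'⟩
  obtain rfl : g' = g := hg_unique g' hg'
  obtain rfl : h' = h := hh_unique h' fun ij => hh' ij.1 ij.2
  rfl

/-- Every strategy over the two-agent GP scenario determines a unique pair of
functions `(g : I₁ → O₁, h : I₁ × I₂ → O₂)`. -/
theorem gp_strategy_functions (I₁ I₂ O₁ O₂ : Type*)
    [Finite I₁] [Finite I₂] [Finite O₁] [Finite O₂]
    [Nonempty I₁] [Nonempty I₂] [Nonempty O₁] [Nonempty O₂]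
    (σ : Set (Set ((I₁ ⊕ I₂) × (O₁ ⊕ O₂))))
    (hσ : (GP I₁ I₂ O₁ O₂).IsStrategy σ) :
    ∃! p : (I₁ → O₁) × (I₁ × I₂ → O₂),
      (∀ i : I₁,
        ({(Sum.inl i, Sum.inl (p.1 i))} : Set ((I₁ ⊕ I₂) × (O₁ ⊕ O₂))) ∈ σ) ∧
      (∀ (i : I₁) (j : I₂),
        ({(Sum.inl i, Sum.inl (p.1 i)), (Sum.inr j, Sum.inr (p.2 (i, j)))} :
          Set ((I₁ ⊕ I₂) × (O₁ ⊕ O₂))) ∈ σ) :=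
  gp_strategy_functions_general I₁ I₂ O₁ O₂ σ hσ
end

section
/- There exists a causal measurement scenario and a cover for which the strategy presheaf Γ is not separated: concretely, for X = {x,y,z}, O_w = {0,1}, enabling relation ∅ ⊢ x, ∅ ⊢ y, {(x,0),(y,0)} ⊢ z, and cover U₁ = {x,z}, U₂ = {y,z}, the strategies σ₁ = {∅, {(x,0)}} over M_{U₁} and σ₂ = {∅, {(y,0)}} over M_{U₂} form a compatible family whose union is not total (z is accessible from {(x,0),(y,0)} ∈ Hist(M_X) but the union contains no extension by z), and there exist two distinct strategies over M_X both restricting to σ₁ and σ₂. -/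
open CMS

/-- The concrete scenario of the non-separation example: `X = {x,y,z} = Fin 3`,
outcomes `Fin 2`, enabling `∅ ⊢ x`, `∅ ⊢ y`, `{(x,0),(y,0)} ⊢ z`. -/
def Mex : CMS (Fin 3) (Fin 2) where
  O := fun _ => Set.univ
  enab := fun s w => (s = ∅ ∧ (w = 0 ∨ w = 1)) ∨
    (s = ({((0 : Fin 3), (0 : Fin 2)), ((1 : Fin 3), (0 : Fin 2))} :
      Set (Fin 3 × Fin 2)) ∧ w = 2)

def Uex₁ : Set (Fin 3) := {0, 2}
def Uex₂ : Set (Fin 3) := {1, 2}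

def σex₁ : Set (Set (Fin 3 × Fin 2)) := {∅, {((0 : Fin 3), (0 : Fin 2))}}
def σex₂ : Set (Set (Fin 3 × Fin 2)) := {∅, {((1 : Fin 3), (0 : Fin 2))}}

/-!
Every assignment `f` of outcomes to all measurements yields a strategy on any scenario: Nature
answers each measurement `x` with `f x`, and the histories that follow `f` are downward closed
and respond uniquely. Restricting such a strategy to a subscenario gives the strategy of `f`
there. On `M_{U₁}` and `M_{U₂}` the measurement `z` is never accessible, so `σ₁` and `σ₂` are
the strategies of each assignment `x, y ↦ 0, z ↦ c` (`c = 0, 1`), while `M_{U₁ ∩ U₂}` has only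
the empty history. On `M_X` the two assignments give distinct strategies, as they differ after
the history `{(x,0),(y,0)}`.
-/

namespace CMS

variable {X Ω : Type*} {M : CMS X Ω}

def assignmentStrategy (M : CMS X Ω) (f : X → Ω) : Set (Set (X × Ω)) :=
  {s | M.Hist s ∧ ∀ e ∈ s, e.2 = f e.1}

theorem isStrategy_assignmentStrategy {f : X → Ω} (hf : ∀ x, f x ∈ M.O x) :
    M.IsStrategy (M.assignmentStrategy f) where
  nonempty := ⟨∅, Hist.empty, by simp⟩
  hist _ hs := hs.1
  dc _ _ hs hst ht := ⟨hs, fun e he => ht.2 e (hst he)⟩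
  resp := by
    rintro s ⟨hs, hsf⟩ x hx
    refine ⟨f x, ⟨hf x, hs.step hx (hf x), ?_⟩, ?_⟩
    · rintro e (he | rfl)
      exacts [hsf e he, rfl]
    · rintro o ⟨-, -, ho⟩
      exact ho (x, o) (Or.inr rfl)

theorem Hist.singleton {x : X} {o : Ω} (hx : M.enab ∅ x) (ho : o ∈ M.O x) :
    M.Hist {(x, o)} := by
  simpa using Hist.empty.step ⟨by simp [domain], ∅, subset_rfl, hx⟩ ho

theorem Hist.exists_enab {s : Set (X × Ω)} {x : X} {o : Ω} (hs : M.Hist s) (he : (x, o) ∈ s) :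
    ∃ t ⊆ s, M.enab t x := by
  induction hs with
  | empty => exact absurd he (Set.notMem_empty _)
  | step _ hacc _ ih =>
    rw [Set.mem_union, Set.mem_singleton_iff, Prod.mk.injEq] at he
    rcases he with he | ⟨rfl, -⟩
    · obtain ⟨t, hts, ht⟩ := ih he
      exact ⟨t, hts.trans Set.subset_union_left, ht⟩
    · obtain ⟨-, t, hts, ht⟩ := hacc
      exact ⟨t, hts.trans Set.subset_union_left, ht⟩

theorem Hist.restrict_mono {U V : Set X} (hUV : U ⊆ V) {s : Set (X × Ω)}
    (hs : (M.restrict U).Hist s) : (M.restrict V).Hist s := by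
  induction hs with
  | empty => exact Hist.empty
  | step _ hacc ho ih =>
    obtain ⟨hx, t, hts, ht, htU⟩ := hacc
    exact ih.step ⟨hx, t, hts, ht, htU.trans hUV⟩ ho

theorem assignmentStrategy_inter_hist_restrict {U V : Set X} (hUV : U ⊆ V) (f : X → Ω) :
    (M.restrict V).assignmentStrategy f ∩ {s | (M.restrict U).Hist s} =
      (M.restrict U).assignmentStrategy f := by
  ext s
  exact ⟨fun ⟨⟨_, hsf⟩, hs⟩ => ⟨hs, hsf⟩, fun ⟨hs, hsf⟩ => ⟨⟨hs.restrict_mono hUV, hsf⟩, hs⟩⟩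

end CMS

theorem mex_mem_of_hist_restrict {U : Set (Fin 3)} {s : Set (Fin 3 × Fin 2)} {x : Fin 3}
    {o : Fin 2} (hs : (Mex.restrict U).Hist s) (he : (x, o) ∈ s) :
    x ∈ U ∧ (x = 2 → 0 ∈ U ∧ 1 ∈ U) := by
  obtain ⟨t, -, hen, htU⟩ := hs.exists_enab he
  refine ⟨htU (Or.inr rfl), ?_⟩
  rintro rfl
  rcases hen with ⟨-, h | h⟩ | ⟨rfl, -⟩
  · exact absurd h (by decide)
  · exact absurd h (by decide)
  · exact ⟨htU (Or.inl ⟨0, by simp⟩), htU (Or.inl ⟨0, by simp⟩)⟩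

theorem mex_hist_restrict_singleton {U : Set (Fin 3)} {i : Fin 3} (hi : i = 0 ∨ i = 1)
    (hU : i ∈ U) (o : Fin 2) : (Mex.restrict U).Hist {(i, o)} :=
  Hist.singleton ⟨Or.inl ⟨rfl, hi⟩, by simpa [domain] using hU⟩ (Set.mem_univ o)

theorem mex_assignmentStrategy_restrict_pair {i : Fin 3} (hi : i = 0 ∨ i = 1) (c : Fin 2) :
    (Mex.restrict {i, 2}).assignmentStrategy ![0, 0, c] = {∅, {(i, 0)}} := by
  have hfi : (![0, 0, c] : Fin 3 → Fin 2) i = 0 := by rcases hi with rfl | rfl <;> rfl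
  ext s
  constructor
  · rintro ⟨hs, hsf⟩
    suffices s ⊆ {(i, 0)} by
      rcases Set.subset_singleton_iff_eq.mp this with rfl | rfl
      exacts [Or.inl rfl, Or.inr rfl]
    rintro ⟨x, o⟩ he
    obtain ⟨hxU, hx2⟩ := mex_mem_of_hist_restrict hs he
    obtain rfl : x = i := by
      rcases hxU with rfl | rfl
      · rfl
      · obtain ⟨h0, h1⟩ := hx2 rfl
        rcases hi with rfl | rfl <;> simp at h0 h1
    exact Prod.ext rfl ((hsf _ he).trans hfi)
  · rintro (rfl | rfl)
    · exact ⟨Hist.empty, by simp⟩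
    · exact ⟨mex_hist_restrict_singleton hi (by simp) 0, by simp [hfi]⟩

theorem mex_hist_xy : (Mex.restrict (Uex₁ ∪ Uex₂)).Hist {(0, 0), (1, 0)} := by
  have hy : (Mex.restrict (Uex₁ ∪ Uex₂)).Hist {(1, 0)} :=
    mex_hist_restrict_singleton (Or.inr rfl) (by simp [Uex₂]) 0
  have h := hy.step (x := 0) (o := 0)
    ⟨by simp [domain], ∅, by simp, Or.inl ⟨rfl, Or.inl rfl⟩, by simp [domain, Uex₁]⟩
    (Set.mem_univ _)
  rwa [Set.union_singleton] at h

theorem mex_acc_z : (Mex.restrict (Uex₁ ∪ Uex₂)).acc {(0, 0), (1, 0)} 2 :=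
  ⟨by simp [domain], _, subset_rfl, Or.inr ⟨rfl, rfl⟩,
    fun w _ => by fin_cases w <;> simp [Uex₁, Uex₂]⟩

theorem mex_assignmentStrategy_restrict_Uex₁ (c : Fin 2) :
    (Mex.restrict Uex₁).assignmentStrategy ![0, 0, c] = σex₁ :=
  mex_assignmentStrategy_restrict_pair (Or.inl rfl) c

theorem mex_assignmentStrategy_restrict_Uex₂ (c : Fin 2) :
    (Mex.restrict Uex₂).assignmentStrategy ![0, 0, c] = σex₂ :=
  mex_assignmentStrategy_restrict_pair (Or.inr rfl) c

theorem mex_hist_restrict_inter {s : Set (Fin 3 × Fin 2)}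
    (hs : (Mex.restrict (Uex₁ ∩ Uex₂)).Hist s) : s = ∅ := by
  refine Set.eq_empty_of_forall_notMem fun ⟨x, o⟩ he => ?_
  obtain ⟨hxU, hx2⟩ := mex_mem_of_hist_restrict hs he
  obtain rfl : x = 2 := by
    simp only [Uex₁, Uex₂, Set.mem_inter_iff, Set.mem_insert_iff, Set.mem_singleton_iff] at hxU
    omega
  simpa [Uex₁, Uex₂] using (hx2 rfl).1

theorem mex_compatible :
    σex₁ ∩ {s | (Mex.restrict (Uex₁ ∩ Uex₂)).Hist s} =
      σex₂ ∩ {s | (Mex.restrict (Uex₁ ∩ Uex₂)).Hist s} := by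
  ext s
  refine and_congr_left fun hs => ?_
  rw [mex_hist_restrict_inter hs]
  simp [σex₁, σex₂]

theorem mex_gluing_inter_hist_restrict_Uex₁ (c : Fin 2) :
    (Mex.restrict (Uex₁ ∪ Uex₂)).assignmentStrategy ![0, 0, c] ∩
      {s | (Mex.restrict Uex₁).Hist s} = σex₁ := by
  rw [assignmentStrategy_inter_hist_restrict Set.subset_union_left,
    mex_assignmentStrategy_restrict_Uex₁]

theorem mex_gluing_inter_hist_restrict_Uex₂ (c : Fin 2) :
    (Mex.restrict (Uex₁ ∪ Uex₂)).assignmentStrategy ![0, 0, c] ∩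
      {s | (Mex.restrict Uex₂).Hist s} = σex₂ := by
  rw [assignmentStrategy_inter_hist_restrict Set.subset_union_right,
    mex_assignmentStrategy_restrict_Uex₂]

theorem mex_assignmentStrategy_ne :
    (Mex.restrict (Uex₁ ∪ Uex₂)).assignmentStrategy ![0, 0, 0] ≠
      (Mex.restrict (Uex₁ ∪ Uex₂)).assignmentStrategy ![0, 0, 1] := by
  intro h
  have hz : {(0, 0), (1, 0)} ∪ {(2, 0)} ∈
      (Mex.restrict (Uex₁ ∪ Uex₂)).assignmentStrategy ![0, 0, 0] :=
    ⟨mex_hist_xy.step mex_acc_z (Set.mem_univ _), by simp⟩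
  rw [h] at hz
  simpa using hz.2 (2, 0) (Or.inr rfl)

theorem mex_z_notMem_of_mem_union {s : Set (Fin 3 × Fin 2)} (hs : s ∈ σex₁ ∪ σex₂) (o : Fin 2) :
    (2, o) ∉ s := by
  rcases hs with (rfl | rfl) | (rfl | rfl) <;> simp

/-- The strategy presheaf is not separated: a compatible family whose union is
not total, admitting two distinct gluings. -/
theorem not_separated :
    (Mex.restrict Uex₁).IsStrategy σex₁ ∧ (Mex.restrict Uex₂).IsStrategy σex₂ ∧
    σex₁ ∩ {s | (Mex.restrict (Uex₁ ∩ Uex₂)).Hist s} =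
      σex₂ ∩ {s | (Mex.restrict (Uex₁ ∩ Uex₂)).Hist s} ∧
    (Mex.restrict (Uex₁ ∪ Uex₂)).Hist
      ({((0 : Fin 3), (0 : Fin 2)), ((1 : Fin 3), (0 : Fin 2))} : Set (Fin 3 × Fin 2)) ∧
    (Mex.restrict (Uex₁ ∪ Uex₂)).acc
      ({((0 : Fin 3), (0 : Fin 2)), ((1 : Fin 3), (0 : Fin 2))} : Set (Fin 3 × Fin 2)) 2 ∧
    (∀ o : Fin 2,
      ({((0 : Fin 3), (0 : Fin 2)), ((1 : Fin 3), (0 : Fin 2))} : Set (Fin 3 × Fin 2)) ∪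
        {((2 : Fin 3), o)} ∉ σex₁ ∪ σex₂) ∧
    ∃ τ₁ τ₂ : Set (Set (Fin 3 × Fin 2)),
      (Mex.restrict (Uex₁ ∪ Uex₂)).IsStrategy τ₁ ∧
      (Mex.restrict (Uex₁ ∪ Uex₂)).IsStrategy τ₂ ∧ τ₁ ≠ τ₂ ∧
      τ₁ ∩ {s | (Mex.restrict Uex₁).Hist s} = σex₁ ∧
      τ₁ ∩ {s | (Mex.restrict Uex₂).Hist s} = σex₂ ∧
      τ₂ ∩ {s | (Mex.restrict Uex₁).Hist s} = σex₁ ∧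
      τ₂ ∩ {s | (Mex.restrict Uex₂).Hist s} = σex₂ := by
  have hstrat : ∀ (U : Set (Fin 3)) (f : Fin 3 → Fin 2),
      (Mex.restrict U).IsStrategy ((Mex.restrict U).assignmentStrategy f) := fun _ _ =>
    isStrategy_assignmentStrategy fun _ => Set.mem_univ _
  exact ⟨mex_assignmentStrategy_restrict_Uex₁ 0 ▸ hstrat _ _,
    mex_assignmentStrategy_restrict_Uex₂ 0 ▸ hstrat _ _, mex_compatible, mex_hist_xy, mex_acc_z,
    fun o h => mex_z_notMem_of_mem_union h o (Or.inr rfl),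
    _, _, hstrat _ _, hstrat _ _, mex_assignmentStrategy_ne,
    mex_gluing_inter_hist_restrict_Uex₁ 0, mex_gluing_inter_hist_restrict_Uex₂ 0,
    mex_gluing_inter_hist_restrict_Uex₁ 1, mex_gluing_inter_hist_restrict_Uex₂ 1⟩
end
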